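/- arXiv:2010.04121 — 5 statements merged into one kernel-verified Lean document; each statement's English description precedes it below -/
import Mathlib

section
/- Let V be the Volterra operator on L²[0,1]. Then the operator M := (I + V)⁻¹ exists, is a contraction (‖M‖ = 1), its spectrum is Spec(M) = {1}, but M ≠ I; consequently 1 is an isolated spectral point of M whose quasi-nilpotent part N = (1 − M)P (with P the Riesz projection, here P = I) is nonzero. -/
/-!
Iterating |Vf(x)| ≤ ∫₀ˣ |f| gives ‖Vⁿ⁺¹‖ ≤ 1/n!, so V is quasinilpotent and, by spectral mapping,
σ(I + V) = {1}; hence I + V is invertible, σ(M) = {1} and ‖M‖ ≥ 1. By Fubini, the symmetry of the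
kernel conj f(x) f(t) gives 2 Re⟪f, Vf⟫ = |∫ f|² ≥ 0, so ‖(I + V)f‖ ≥ ‖f‖ and ‖M‖ ≤ 1.
Finally V sends 1 to x, so V ≠ 0 and M ≠ I.
-/

open MeasureTheory Set ComplexConjugate

theorem spectrum_eq_singleton_zero_of_norm_pow_succ_le {A : Type*} [NormedRing A]
    [NormedAlgebra ℂ A] [CompleteSpace A] [Nontrivial A] [NormOneClass A] {a : A}
    (h : ∀ n : ℕ, ‖a ^ (n + 1)‖ ≤ 1 / n.factorial) : spectrum ℂ a = {0} := by
  refine (spectrum.nonempty a).subset_singleton_iff.mp fun z hz => ?_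
  by_contra hz0
  have hpos : 0 < ‖z‖ := norm_pos_iff.mpr hz0
  have hbound : ∀ n : ℕ, ‖z‖ ≤ ‖z‖⁻¹ ^ n / n.factorial := fun n => by
    have hzn : ‖z‖ ^ (n + 1) ≤ 1 / n.factorial := by
      rw [← norm_pow]
      exact (spectrum.norm_le_norm_of_mem
        (spectrum.pow_image_subset a (n + 1) ⟨z, hz, rfl⟩)).trans (h n)
    calc ‖z‖ = ‖z‖ ^ (n + 1) * ‖z‖⁻¹ ^ n := by
          rw [pow_succ, mul_right_comm, ← mul_pow, mul_inv_cancel₀ hpos.ne', one_pow, one_mul]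
      _ ≤ 1 / n.factorial * ‖z‖⁻¹ ^ n := by gcongr
      _ = ‖z‖⁻¹ ^ n / n.factorial := by ring
  exact hpos.not_ge (ge_of_tendsto' (FloorSemiring.tendsto_pow_div_factorial_atTop _) hbound)

theorem spectrum_one_add_eq_singleton_one {R A : Type*} [CommRing R] [Ring A] [Algebra R A]
    {a : A} (h : spectrum R a = {0}) : spectrum R (1 + a) = {1} := by
  rw [← map_one (algebraMap R A), ← spectrum.singleton_add_eq, h, singleton_add_singleton,
    add_zero]

theorem spectrum_ring_inverse_eq_singleton_one {𝕜 A : Type*} [Field 𝕜] [Ring A] [Algebra 𝕜 A]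
    {a : A} (h : spectrum 𝕜 a = {1}) : spectrum 𝕜 (Ring.inverse a) = {1} := by
  obtain ⟨u, rfl⟩ : IsUnit a := spectrum.isUnit_of_zero_notMem 𝕜 (by simp [h])
  rw [Ring.inverse_unit, ← spectrum.map_inv, h, inv_singleton, inv_one]

theorem norm_le_norm_one_add_apply_of_re_inner_nonneg {𝕜 E : Type*} [RCLike 𝕜]
    [NormedAddCommGroup E] [InnerProductSpace 𝕜 E] {T : E →L[𝕜] E}
    (hT : ∀ f, 0 ≤ RCLike.re (inner 𝕜 f (T f))) (f : E) : ‖f‖ ≤ ‖(1 + T) f‖ := by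
  have hsq : ‖f‖ ^ 2 ≤ ‖f + T f‖ ^ 2 := by
    rw [norm_add_sq (𝕜 := 𝕜)]
    nlinarith [hT f, sq_nonneg ‖T f‖]
  simpa using (pow_le_pow_iff_left₀ (norm_nonneg _) (norm_nonneg _) two_ne_zero).mp hsq

theorem norm_ring_inverse_le_one_of_norm_le_norm_apply {𝕜 E : Type*}
    [NontriviallyNormedField 𝕜] [NormedAddCommGroup E] [NormedSpace 𝕜 E] {T : E →L[𝕜] E}
    (hT : IsUnit T) (h : ∀ f, ‖f‖ ≤ ‖T f‖) : ‖Ring.inverse T‖ ≤ 1 :=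
  ContinuousLinearMap.opNorm_le_bound _ zero_le_one fun f => by
    have hf : T (Ring.inverse T f) = f := by
      rw [← mul_apply_eq_comp, Ring.mul_inverse_cancel T hT, one_apply_eq_self]
    simpa [hf] using h (Ring.inverse T f)

theorem measure_prod_diagonal_eq_zero {α : Type*} [MeasurableSpace α] [MeasurableEq α]
    (μ ν : Measure α) [SFinite ν] [NullSingletonClass ν] : μ.prod ν (diagonal α) = 0 := by
  have hslice : ∀ x : α, Prod.mk x ⁻¹' diagonal α = {x} := fun x => by ext; simp [eq_comm]
  simp [Measure.prod_apply measurableSet_diagonal, hslice]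

theorem integrable_conj_mul_prod {α β : Type*} [MeasurableSpace α] [MeasurableSpace β]
    {μ : Measure α} {ν : Measure β} {f : α → ℂ} {g : β → ℂ} (hf : Integrable f μ)
    (hg : Integrable g ν) : Integrable (fun p : α × β => conj (f p.1) * g p.2) (μ.prod ν) :=
  (Complex.conjCLE.toContinuousLinearMap.integrable_comp hf).mul_prod hg

theorem two_mul_re_setIntegral_lowerTriangle_eq_normSq {μ : Measure ℝ} [SFinite μ]
    [NullSingletonClass μ] {f : ℝ → ℂ} (hf : Integrable f μ) :
    2 * (∫ p in {p : ℝ × ℝ | p.2 ≤ p.1}, conj (f p.1) * f p.2 ∂μ.prod μ).re =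
      Complex.normSq (∫ x, f x ∂μ) := by
  set K : ℝ × ℝ → ℂ := fun p => conj (f p.1) * f p.2
  set L := {p : ℝ × ℝ | p.2 ≤ p.1}
  set U := {p : ℝ × ℝ | p.1 ≤ p.2}
  have hL : MeasurableSet L := measurableSet_le measurable_snd measurable_fst
  have hU : MeasurableSet U := measurableSet_le measurable_fst measurable_snd
  have hK : Integrable K (μ.prod μ) := integrable_conj_mul_prod hf hf
  -- `K p.swap = conj (K p)`, so swapping the coordinates exchanges the two triangles.
  have hconj : conj (∫ p in L, K p ∂μ.prod μ) = ∫ p in U, K p ∂μ.prod μ := by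
    rw [← integral_conj, ← integral_indicator hL, ← integral_indicator hU,
      ← integral_prod_swap]
    congr 1
    ext p
    simp [K, L, U, indicator, mul_comm]
  -- The two closed triangles cover the square and overlap only on the null diagonal.
  have hcover : ∫ p in L, K p ∂μ.prod μ + ∫ p in U, K p ∂μ.prod μ = ∫ p, K p ∂μ.prod μ := by
    rw [← integral_indicator hL, ← integral_indicator hU,
      ← integral_add (hK.indicator hL) (hK.indicator hU)]
    have hD : MeasurableSet (diagonal ℝ) := measurableSet_diagonal
    have hsplit : ∀ p, L.indicator K p + U.indicator K p = K p + (diagonal ℝ).indicator K p := by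
      intro p
      rcases lt_trichotomy p.1 p.2 with h | h | h
      · simp [L, U, indicator, h.le, h.not_ge, h.ne]
      · simp [L, U, indicator, h]
      · simp [L, U, indicator, h.le, h.not_ge, h.ne']
    simp_rw [hsplit]
    rw [integral_add hK (hK.indicator hD), integral_indicator hD,
      Measure.restrict_eq_zero.mpr (measure_prod_diagonal_eq_zero μ μ), integral_zero_measure,
      add_zero]
  have hKint : ∫ p, K p ∂μ.prod μ = conj (∫ x, f x ∂μ) * ∫ x, f x ∂μ := by
    rw [← integral_conj]; exact integral_prod_mul (fun x => conj (f x)) f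
  have h := Complex.add_conj (∫ p in L, K p ∂μ.prod μ)
  rw [hconj, hcover, hKint, mul_comm, Complex.mul_conj] at h
  exact_mod_cast h.symm

theorem integral_Ioc_mul_pow_div_factorial {x : ℝ} (hx : 0 ≤ x) (c : ℝ) (n : ℕ) :
    ∫ t in Ioc 0 x, c * t ^ n / n.factorial = c * x ^ (n + 1) / (n + 1).factorial := by
  rw [← intervalIntegral.integral_of_le hx, intervalIntegral.integral_div,
    intervalIntegral.integral_const_mul, integral_pow, Nat.factorial_succ]
  push_cast
  field_simp
  ring

theorem MeasureTheory.Lp.integral_norm_le_norm {α E : Type*} [MeasurableSpace α] {μ : Measure α}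
    [IsProbabilityMeasure μ] [NormedAddCommGroup E] {p : ENNReal} (hp : 1 ≤ p) (f : Lp E p μ) :
    ∫ x, ‖(f : α → E) x‖ ∂μ ≤ ‖f‖ := by
  rw [Lp.norm_def, integral_norm_eq_lintegral_enorm (Lp.aestronglyMeasurable f),
    ← eLpNorm_one_eq_lintegral_enorm]
  exact ENNReal.toReal_mono (Lp.eLpNorm_ne_top f)
    (eLpNorm_le_eLpNorm_of_exponent_le hp (Lp.aestronglyMeasurable f))

local notation "μ₀" => volume.restrict (Icc (0 : ℝ) 1)

instance : IsProbabilityMeasure μ₀ := ⟨by simp⟩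

theorem restrict_Ioc_eq_restrict_Icc_restrict_Iic {x : ℝ} (hx : x ≤ 1) :
    volume.restrict (Ioc 0 x) = (μ₀).restrict (Iic x) := by
  have hIcc : Iic x ∩ Icc 0 1 = Icc 0 x := by
    ext t
    simp only [mem_inter_iff, mem_Iic, mem_Icc]
    exact ⟨fun h => ⟨h.2.1, h.1⟩, fun h => ⟨h.2, h.1, h.2.trans hx⟩⟩
  rw [Measure.restrict_restrict measurableSet_Iic, hIcc]
  exact Measure.restrict_congr_set Ioc_ae_eq_Icc

def IsVolterra (V : Lp ℂ 2 μ₀ →L[ℂ] Lp ℂ 2 μ₀) : Prop :=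
  ∀ f : Lp ℂ 2 μ₀, (V f : ℝ → ℂ) =ᵐ[μ₀] fun x => ∫ t in Ioc (0 : ℝ) x, (f : ℝ → ℂ) t

namespace IsVolterra

variable {V : Lp ℂ 2 μ₀ →L[ℂ] Lp ℂ 2 μ₀}

theorem ae_norm_apply_le_integral_norm (hV : IsVolterra V) (f : Lp ℂ 2 μ₀) :
    ∀ᵐ x ∂μ₀, ‖(V f : ℝ → ℂ) x‖ ≤ ∫ t in Ioc 0 x, ‖(f : ℝ → ℂ) t‖ := by
  filter_upwards [hV f] with x hx
  rw [hx]
  exact norm_integral_le_integral_norm _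

theorem ae_norm_apply_le_norm (hV : IsVolterra V) (f : Lp ℂ 2 μ₀) :
    ∀ᵐ x ∂μ₀, ‖(V f : ℝ → ℂ) x‖ ≤ ‖f‖ := by
  filter_upwards [hV.ae_norm_apply_le_integral_norm f, ae_restrict_mem measurableSet_Icc]
    with x hx hmem
  refine hx.trans (le_trans ?_ (Lp.integral_norm_le_norm one_le_two f))
  rw [restrict_Ioc_eq_restrict_Icc_restrict_Iic hmem.2]
  exact setIntegral_le_integral ((Lp.memLp f).integrable one_le_two).norm
    (.of_forall fun _ => norm_nonneg _)

theorem ae_norm_apply_le_of_ae_norm_le (hV : IsVolterra V) {f : Lp ℂ 2 μ₀} {c : ℝ} {n : ℕ}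
    (hf : ∀ᵐ t ∂μ₀, ‖(f : ℝ → ℂ) t‖ ≤ c * t ^ n / n.factorial) :
    ∀ᵐ x ∂μ₀, ‖(V f : ℝ → ℂ) x‖ ≤ c * x ^ (n + 1) / (n + 1).factorial := by
  filter_upwards [hV.ae_norm_apply_le_integral_norm f, ae_restrict_mem measurableSet_Icc]
    with x hx hmem
  refine hx.trans ?_
  rw [← integral_Ioc_mul_pow_div_factorial hmem.1]
  refine integral_mono_of_nonneg (.of_forall fun _ => norm_nonneg _)
    (((intervalIntegral.intervalIntegrable_pow n).1.const_mul c).div_const _) ?_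
  rw [restrict_Ioc_eq_restrict_Icc_restrict_Iic hmem.2]
  exact ae_restrict_of_ae hf

theorem ae_norm_pow_succ_apply_le (hV : IsVolterra V) (f : Lp ℂ 2 μ₀) (n : ℕ) :
    ∀ᵐ x ∂μ₀, ‖((V ^ (n + 1)) f : ℝ → ℂ) x‖ ≤ ‖f‖ * x ^ n / n.factorial := by
  induction n with
  | zero => simpa using hV.ae_norm_apply_le_norm f
  | succ n ih => rw [pow_succ']; exact hV.ae_norm_apply_le_of_ae_norm_le ih

theorem norm_pow_succ_le (hV : IsVolterra V) (n : ℕ) : ‖V ^ (n + 1)‖ ≤ 1 / n.factorial := by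
  refine ContinuousLinearMap.opNorm_le_bound _ (by positivity) fun f => ?_
  have hbound : ∀ᵐ x ∂μ₀, ‖((V ^ (n + 1)) f : ℝ → ℂ) x‖ ≤ 1 / n.factorial * ‖f‖ := by
    filter_upwards [hV.ae_norm_pow_succ_apply_le f n, ae_restrict_mem measurableSet_Icc]
      with x hx hmem
    refine hx.trans ?_
    rw [one_div_mul_eq_div]
    gcongr
    exact mul_le_of_le_one_right (norm_nonneg f) (pow_le_one₀ hmem.1 hmem.2)
  simpa [measureUnivNNReal] using Lp.norm_le_of_ae_bound (by positivity) hbound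

theorem inner_apply_self_eq_setIntegral_lowerTriangle (hV : IsVolterra V) (g : Lp ℂ 2 μ₀) :
    inner ℂ g (V g) =
      ∫ p in {p : ℝ × ℝ | p.2 ≤ p.1}, conj ((g : ℝ → ℂ) p.1) * (g : ℝ → ℂ) p.2 ∂(μ₀).prod μ₀ := by
  have hg : Integrable (g : ℝ → ℂ) μ₀ := (Lp.memLp g).integrable one_le_two
  have hL : MeasurableSet {p : ℝ × ℝ | p.2 ≤ p.1} := measurableSet_le measurable_snd measurable_fst
  rw [L2.inner_def, ← integral_indicator hL,
    integral_prod _ ((integrable_conj_mul_prod hg hg).indicator hL)]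
  refine integral_congr_ae ?_
  filter_upwards [hV g, ae_restrict_mem measurableSet_Icc] with x hx hmem
  rw [RCLike.inner_apply', hx, restrict_Ioc_eq_restrict_Icc_restrict_Iic hmem.2,
    ← integral_const_mul, ← integral_indicator measurableSet_Iic]
  congr 1

theorem re_inner_apply_self_nonneg (hV : IsVolterra V) (g : Lp ℂ 2 μ₀) :
    0 ≤ RCLike.re (inner ℂ g (V g)) := by
  have h := two_mul_re_setIntegral_lowerTriangle_eq_normSq
    ((Lp.memLp g).integrable one_le_two : Integrable (g : ℝ → ℂ) μ₀)
  rw [← hV.inner_apply_self_eq_setIntegral_lowerTriangle] at h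
  have := Complex.normSq_nonneg (∫ x, (g : ℝ → ℂ) x ∂μ₀)
  simp only [RCLike.re_to_complex]
  linarith

theorem ne_zero (hV : IsVolterra V) : V ≠ 0 := by
  intro hV0
  set one : Lp ℂ 2 μ₀ := Lp.const 2 (μ₀) 1
  have hzero : (V one : ℝ → ℂ) =ᵐ[μ₀] 0 := by
    rw [hV0, zero_apply]
    exact Lp.coeFn_zero _ _ _
  have hx : ∀ᵐ x : ℝ ∂μ₀, (x : ℂ) = 0 := by
    filter_upwards [hV one, hzero, ae_restrict_mem measurableSet_Icc] with x hx hx0 hmem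
    have hint : ∫ t in Ioc 0 x, (one : ℝ → ℂ) t = x := by
      rw [integral_congr_ae (g := fun _ => 1)]
      · simp [hmem.1]
      rw [restrict_Ioc_eq_restrict_Icc_restrict_Iic hmem.2]
      exact ae_restrict_of_ae (Lp.coeFn_const _ _ _)
    rw [← hint, ← hx, hx0, Pi.zero_apply]
  have hfalse : ∀ᵐ x ∂μ₀, False := by
    filter_upwards [hx, Measure.ae_ne (μ₀) 0] with x hx hx0
    exact hx0 (Complex.ofReal_eq_zero.mp hx)
  exact IsProbabilityMeasure.ne_zero (μ₀)
    (ae_eq_bot.mp (Filter.eventually_false_iff_eq_bot.mp hfalse))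

end IsVolterra

/-- For the Volterra operator `V` on `L²[0,1]`, the operator
`M := (I + V)⁻¹` exists, has norm `‖M‖ = 1` (a contraction), its spectrum is `{1}`,
but `M ≠ I`; consequently the quasi-nilpotent part `N = (1 - M)P` at the isolated
spectral point `1` (where the Riesz projection `P` equals the identity since
`Spec(M) = {1}`) is nonzero, i.e. `1 - M ≠ 0`. -/
theorem stmt2
    (μ : Measure ℝ) (hμ : μ = volume.restrict (Set.Icc (0 : ℝ) 1))
    (V : Lp ℂ 2 μ →L[ℂ] Lp ℂ 2 μ)
    (hV : ∀ f : Lp ℂ 2 μ,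
      (V f : ℝ → ℂ) =ᵐ[μ] fun x => ∫ t in Set.Ioc (0 : ℝ) x, (f : ℝ → ℂ) t) :
    IsUnit (1 + V) ∧
    ‖Ring.inverse (1 + V)‖ = 1 ∧
    spectrum ℂ (Ring.inverse (1 + V)) = {1} ∧
    Ring.inverse (1 + V) ≠ 1 ∧
    1 - Ring.inverse (1 + V) ≠ 0 := by
  subst hμ
  have hVolterra : IsVolterra V := hV
  have hV0 : V ≠ 0 := hVolterra.ne_zero
  have : Nontrivial (Lp ℂ 2 μ₀) := by
    by_contra h
    rw [not_nontrivial_iff_subsingleton] at h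
    exact hV0 (Subsingleton.elim _ _)
  have hσ : spectrum ℂ (1 + V) = {1} := spectrum_one_add_eq_singleton_one
    (spectrum_eq_singleton_zero_of_norm_pow_succ_le hVolterra.norm_pow_succ_le)
  have hu : IsUnit (1 + V) := spectrum.isUnit_of_zero_notMem ℂ (by simp [hσ])
  have hσM : spectrum ℂ (Ring.inverse (1 + V)) = {1} := spectrum_ring_inverse_eq_singleton_one hσ
  have hM_le : ‖Ring.inverse (1 + V)‖ ≤ 1 := norm_ring_inverse_le_one_of_norm_le_norm_apply hu
    (norm_le_norm_one_add_apply_of_re_inner_nonneg hVolterra.re_inner_apply_self_nonneg)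
  have hM_ge : 1 ≤ ‖Ring.inverse (1 + V)‖ := by
    simpa using spectrum.norm_le_norm_of_mem (hσM.symm ▸ mem_singleton 1 : (1 : ℂ) ∈ _)
  have hM_ne : Ring.inverse (1 + V) ≠ 1 := fun h => hV0 <| by
    simpa [h] using (Ring.inverse_inverse hu).symm
  exact ⟨hu, le_antisymm hM_le hM_ge, hσM, hM_ne, sub_ne_zero_of_ne hM_ne.symm⟩
end

section
/- Let ℒ be the generator of a strongly continuous contraction semigroup on a Banach space X, and for k ∈ ℕ let ℒ_k = kℒ(k − ℒ)⁻¹ be the k-th Yosida approximant. If B ∈ B(X) is such that Bℒ and ℒB are densely defined and bounded, then ‖Bℒ_k B − BℒB‖ ≤ C/k for a constant C independent of k, where the bounded operators are identified with their unique bounded extensions. -/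
/-!
On the dense set of `y` with `B y ∈ dom L`, the resolvent identities give
`k² R_k (B y) - k B y = k R_k (L B y)` and `k R_k w - w = L R_k w`, so the difference
`B L_k B - B (L B)` equals `(B L) R_k (L B)` there, hence everywhere by continuity.
Its norm is then at most `‖B L‖ ‖R_k‖ ‖L B‖ ≤ ‖B L‖ ‖L B‖ / k`.
-/

namespace YosidaApproximant

variable {X : Type*} [NormedAddCommGroup X] [NormedSpace ℂ X]
  {L : X →ₗ.[ℂ] X} {R : X →L[ℂ] X} {c : ℂ}

lemma sq_smul_sub_smul_eq_smul_apply_generator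
    (hleft : ∀ x : L.domain, R (c • (x : X) - L x) = x) (z : L.domain) :
    c ^ 2 • R z - c • (z : X) = c • R (L z) := by
  have h := hleft z
  rw [map_sub, map_smul] at h
  linear_combination (norm := module) c • h

lemma smul_sub_self_eq_generator_apply (hmem : ∀ x, R x ∈ L.domain)
    (hright : ∀ x, c • R x - L ⟨R x, hmem x⟩ = x) (w : X) :
    c • R w - w = L ⟨R w, hmem w⟩ := by
  linear_combination (norm := module) hright w

variable {B BL LB : X →L[ℂ] X}

lemma sandwich_sub_apply (hmem : ∀ x, R x ∈ L.domain)
    (hright : ∀ x, c • R x - L ⟨R x, hmem x⟩ = x)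
    (hleft : ∀ x : L.domain, R (c • (x : X) - L x) = x)
    (hBL : ∀ x : L.domain, BL x = B (L x))
    (hLB : ∀ (x : X) (hx : B x ∈ L.domain), LB x = L ⟨B x, hx⟩)
    {y : X} (hy : B y ∈ L.domain) :
    (B * (c ^ 2 • R - c • 1) * B - B * LB) y = BL (R (LB y)) := by
  have hyosida := sq_smul_sub_smul_eq_smul_apply_generator hleft ⟨B y, hy⟩
  rw [← hLB y hy] at hyosida
  simp only [sub_apply, mul_apply_eq_comp, smul_apply, one_apply_eq_self,
    hyosida, ← map_sub]
  rw [smul_sub_self_eq_generator_apply hmem hright, ← hBL ⟨R (LB y), hmem _⟩]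

lemma sandwich_sub_eq (hmem : ∀ x, R x ∈ L.domain)
    (hright : ∀ x, c • R x - L ⟨R x, hmem x⟩ = x)
    (hleft : ∀ x : L.domain, R (c • (x : X) - L x) = x)
    (hBL : ∀ x : L.domain, BL x = B (L x))
    (hLBdom : Dense {x : X | B x ∈ L.domain})
    (hLB : ∀ (x : X) (hx : B x ∈ L.domain), LB x = L ⟨B x, hx⟩) :
    B * (c ^ 2 • R - c • 1) * B - B * LB = BL * R * LB :=
  DFunLike.coe_injective <| Continuous.ext_on hLBdom (map_continuous _)
    (map_continuous _) fun _ hy => sandwich_sub_apply hmem hright hleft hBL hLB hy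

end YosidaApproximant

open YosidaApproximant in
theorem stmt4_general {X : Type*} [NormedAddCommGroup X] [NormedSpace ℂ X]
    (L : X →ₗ.[ℂ] X)
    (R : ℕ → X →L[ℂ] X)
    (hRmem : ∀ k : ℕ, 0 < k → ∀ x : X, R k x ∈ L.domain)
    (hRright : ∀ (k : ℕ) (hk : 0 < k) (x : X),
      (k : ℂ) • (R k x) - L ⟨R k x, hRmem k hk x⟩ = x)
    (hRleft : ∀ (k : ℕ), 0 < k → ∀ x : L.domain,
      R k ((k : ℂ) • (x : X) - L x) = (x : X))
    (hRnorm : ∀ k : ℕ, 0 < k → ‖R k‖ ≤ 1 / k)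
    (B BL LB : X →L[ℂ] X)
    (hBL : ∀ x : L.domain, BL x = B (L x))
    (hLBdom : Dense {x : X | B x ∈ L.domain})
    (hLB : ∀ (x : X) (hx : B x ∈ L.domain), LB x = L ⟨B x, hx⟩) :
    ∃ C : ℝ, ∀ k : ℕ, 0 < k →
      ‖B * ((k : ℂ) ^ 2 • R k - (k : ℂ) • 1) * B - B * LB‖ ≤ C / k := by
  refine ⟨‖BL‖ * ‖LB‖, fun k hk => ?_⟩
  rw [sandwich_sub_eq (hRmem k hk) (hRright k hk) (hRleft k hk) hBL hLBdom hLB]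
  calc ‖BL * R k * LB‖ ≤ ‖BL‖ * ‖R k‖ * ‖LB‖ := norm_mul₃_le
    _ ≤ ‖BL‖ * (1 / k) * ‖LB‖ := by grw [hRnorm k hk]
    _ = ‖BL‖ * ‖LB‖ / k := by ring

/-- Let `L` be the (possibly unbounded, densely defined) generator of a
strongly continuous contraction semigroup, encoded via its resolvents
`R k = (k - L)⁻¹` with `‖R k‖ ≤ 1/k`, and let `L_k = k L (k - L)⁻¹ = k² R k - k·1` be
the `k`-th Yosida approximant. If `B` is bounded and `B L`, `L B` are densely defined
and bounded (with bounded extensions `BL`, `LB`), then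
`‖B L_k B - B L B‖ ≤ C / k` for a constant `C` independent of `k`,
where `B L B` is identified with its unique bounded extension `B ∘ LB`. -/
theorem stmt4 {X : Type*} [NormedAddCommGroup X] [NormedSpace ℂ X] [CompleteSpace X]
    (L : X →ₗ.[ℂ] X) (hdense : Dense (L.domain : Set X))
    (R : ℕ → X →L[ℂ] X)
    (hRmem : ∀ k : ℕ, 0 < k → ∀ x : X, R k x ∈ L.domain)
    (hRright : ∀ (k : ℕ) (hk : 0 < k) (x : X),
      (k : ℂ) • (R k x) - L ⟨R k x, hRmem k hk x⟩ = x)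
    (hRleft : ∀ (k : ℕ), 0 < k → ∀ x : L.domain,
      R k ((k : ℂ) • (x : X) - L x) = (x : X))
    (hRnorm : ∀ k : ℕ, 0 < k → ‖R k‖ ≤ 1 / k)
    (B BL LB : X →L[ℂ] X)
    (hBL : ∀ x : L.domain, BL x = B (L x))
    (hLBdom : Dense {x : X | B x ∈ L.domain})
    (hLB : ∀ (x : X) (hx : B x ∈ L.domain), LB x = L ⟨B x, hx⟩) :
    ∃ C : ℝ, ∀ k : ℕ, 0 < k →
      ‖B * ((k : ℂ) ^ 2 • R k - (k : ℂ) • 1) * B - B * LB‖ ≤ C / k :=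
  stmt4_general L R hRmem hRright hRleft hRnorm B BL LB hBL hLBdom hLB
end

section
/- Let X be a Banach space, ℒ ∈ B(X) the (bounded) generator of a contraction semigroup, and M ∈ B(X) a contraction such that Mⁿx → Px for all x ∈ X (strong power-convergence) for some P ∈ B(X). Then for every t ≥ 0 and x ∈ X, (M e^{tℒ/n})ⁿ x → e^{tPℒP} P x as n → ∞. -/
/-!
Put `A n = M * exp ((t / n) • L)`, so that `‖A n‖ ≤ 1` and `A n → M` in norm, and split
`x = P x + (x - P x)`.

Since `‖M‖ ≤ 1`, the strong convergence `M ^ k u → 0` on `ker P` is uniform on compact sets, and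
because `A n ^ m → M ^ m` in norm for each fixed `m`, the same holds for `A n ^ k` with `k ≥ m`
once `n` is large. This kills `A n ^ n (x - P x)`.

On the range of `P`, compare `A n ^ n z` with the orbit `γ s = exp (s • P L P) z`, which stays in
the range of `P` and is fixed by `M`. By the discrete Duhamel formula the error is the sum over
`j < n` of `A n ^ (n - 1 - j)` applied to the one-step defects `A n (γ (j τ)) - γ ((j + 1) τ)`,
`τ = t / n`. To first order in `τ` a defect is `τ • (M - P) (L (γ (j τ)))`, and the second-order
remainders add up to `n * o(1 / n)`. The vectors `(M - P) (L (γ s))`, `s ∈ [0, t]`, form a compact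
subset of `ker P`, so by the uniform decay above the Cesàro means of `‖A n ^ k (M - P) (L (γ _))‖`
tend to `0`.
-/

open Filter Topology Asymptotics NormedSpace

theorem natCast_mul_div_mem_Icc {t : ℝ} (ht : 0 ≤ t) {j n : ℕ} (hj : j ≤ n) :
    (j : ℝ) * (t / n) ∈ Set.Icc 0 t := by
  rcases Nat.eq_zero_or_pos n with rfl | hn
  · simp [Nat.le_zero.1 hj, ht]
  · refine ⟨by positivity, ?_⟩
    calc (j : ℝ) * (t / n) ≤ n * (t / n) := by gcongr
      _ = t := mul_div_cancel₀ _ (by positivity)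

theorem tendsto_inv_mul_sum_range_of_eventually_le {a : ℕ → ℕ → ℝ} {B : ℝ}
    (ha0 : ∀ n k, 0 ≤ a n k) (haB : ∀ n k, a n k ≤ B)
    (ha : ∀ ε > 0, ∃ m, ∀ᶠ n in atTop, ∀ k ≥ m, a n k ≤ ε) :
    Tendsto (fun n : ℕ => (n : ℝ)⁻¹ * ∑ k ∈ Finset.range n, a n k) atTop (𝓝 0) := by
  refine Metric.tendsto_nhds.2 fun ε hε => ?_
  obtain ⟨m, hm⟩ := ha (ε / 2) (half_pos hε)
  have hmB := (tendsto_const_div_atTop_nhds_zero_nat (m * B)).eventually (gt_mem_nhds (half_pos hε))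
  filter_upwards [hm, hmB, eventually_ge_atTop (m + 1)] with n hn hnB hmn
  have hn0 : (0 : ℝ) < n := by exact_mod_cast m.succ_pos.trans_le hmn
  have hsum : ∑ k ∈ Finset.range n, a n k ≤ m * B + n * (ε / 2) := by
    rw [← Finset.sum_range_add_sum_Ico _ (by omega : m ≤ n)]
    gcongr
    · exact (Finset.sum_le_card_nsmul _ _ _ fun k _ => haB n k).trans (by simp)
    · refine (Finset.sum_le_card_nsmul _ _ _ fun k hk => hn k (Finset.mem_Ico.1 hk).1).trans ?_
      rw [Nat.card_Ico, nsmul_eq_mul]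
      gcongr
      exact_mod_cast Nat.sub_le n m
  have hsum0 : 0 ≤ ∑ k ∈ Finset.range n, a n k := Finset.sum_nonneg fun k _ => ha0 n k
  rw [Real.dist_0_eq_abs, abs_of_nonneg (by positivity)]
  calc (n : ℝ)⁻¹ * ∑ k ∈ Finset.range n, a n k ≤ (n : ℝ)⁻¹ * (m * B + n * (ε / 2)) := by gcongr
    _ = m * B / n + ε / 2 := by field_simp
    _ < ε := by linarith

theorem IsIdempotentElem.commute_mul_mul {S : Type*} [Semigroup S] {p : S}
    (hp : IsIdempotentElem p) (a : S) : Commute p (p * a * p) := by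
  change p * (p * a * p) = p * a * p * p
  rw [mul_assoc (p * a), hp.eq, ← mul_assoc, ← mul_assoc, hp.eq]

namespace ContinuousLinearMap

theorem pow_apply_sub_eq_sum {R X : Type*} [Semiring R] [TopologicalSpace X] [AddCommGroup X]
    [Module R X] (A : X →L[R] X) (w : ℕ → X) (n : ℕ) :
    (A ^ n) (w 0) - w n = ∑ k ∈ Finset.range n, (A ^ k) (A (w (n - 1 - k)) - w (n - k)) := by
  induction n with
  | zero => simp
  | succ n ih =>
    have hidx (k : ℕ) : n + 1 - 1 - (k + 1) = n - 1 - k := by omega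
    rw [Finset.sum_range_succ']
    simp only [hidx, Nat.add_sub_add_right, pow_succ', mul_apply_eq_comp]
    rw [← map_sum, ← ih]
    simp only [map_sub, pow_zero, one_apply_eq_self, Nat.add_sub_cancel, Nat.sub_zero]
    abel

variable {𝕜 X : Type*} [NontriviallyNormedField 𝕜] [NormedAddCommGroup X] [NormedSpace 𝕜 X]

section PowerLimit

variable {M P : X →L[𝕜] X}

theorem mul_eq_right_of_tendsto_pow_apply
    (hconv : ∀ x, Tendsto (fun n => (M ^ n) x) atTop (𝓝 (P x))) : M * P = P := by
  ext x
  refine tendsto_nhds_unique ((M.continuous.tendsto _).comp (hconv x)) ?_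
  simpa only [Function.comp_def, ← mul_apply_eq_comp, ← pow_succ'] using
    (hconv x).comp (tendsto_add_atTop_nat 1)

theorem mul_eq_left_of_tendsto_pow_apply
    (hconv : ∀ x, Tendsto (fun n => (M ^ n) x) atTop (𝓝 (P x))) : P * M = P := by
  ext x
  refine tendsto_nhds_unique (hconv (M x)) ?_
  simpa only [Function.comp_def, ← mul_apply_eq_comp, ← pow_succ] using
    (hconv x).comp (tendsto_add_atTop_nat 1)

theorem isIdempotentElem_of_tendsto_pow_apply
    (hconv : ∀ x, Tendsto (fun n => (M ^ n) x) atTop (𝓝 (P x))) : IsIdempotentElem P := by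
  ext x
  refine tendsto_nhds_unique (hconv (P x)) ?_
  have hfix : Function.IsFixedPt M (P x) := congr($(mul_eq_right_of_tendsto_pow_apply hconv) x)
  simp only [FunLike.coe_pow_eq_iterate, (hfix.iterate _).eq]
  exact tendsto_const_nhds

theorem mul_sub_eq_zero_of_tendsto_pow_apply
    (hconv : ∀ x, Tendsto (fun n => (M ^ n) x) atTop (𝓝 (P x))) : P * (M - P) = 0 := by
  rw [mul_sub, mul_eq_left_of_tendsto_pow_apply hconv,
    (isIdempotentElem_of_tendsto_pow_apply hconv).eq, sub_self]

end PowerLimit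

theorem antitone_norm_pow_apply {A : X →L[𝕜] X} (hA : ‖A‖ ≤ 1) (u : X) :
    Antitone fun k => ‖(A ^ k) u‖ :=
  antitone_nat_of_succ_le fun k => by
    rw [pow_succ', mul_apply_eq_comp]
    exact (A.le_opNorm _).trans (mul_le_of_le_one_left (norm_nonneg _) hA)

theorem norm_pow_apply_le {A : X →L[𝕜] X} (hA : ‖A‖ ≤ 1) (k : ℕ) (u : X) : ‖(A ^ k) u‖ ≤ ‖u‖ := by
  simpa using antitone_norm_pow_apply hA u (Nat.zero_le k)

theorem exists_forall_norm_pow_apply_lt {M : X →L[𝕜] X} (hM : ‖M‖ ≤ 1) {K : Set X}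
    (hK : IsCompact K) (hK0 : ∀ u ∈ K, Tendsto (fun n => (M ^ n) u) atTop (𝓝 0)) {ε : ℝ}
    (hε : 0 < ε) : ∃ m, ∀ u ∈ K, ‖(M ^ m) u‖ < ε := by
  have hcover : K ⊆ ⋃ m, {u | ‖(M ^ m) u‖ < ε} := fun u hu =>
    Set.mem_iUnion.2 ((hK0 u hu).norm.eventually (gt_mem_nhds (by simpa using hε))).exists
  have hmono : Monotone fun m => {u | ‖(M ^ m) u‖ < ε} := fun i j hij u hu =>
    (antitone_norm_pow_apply hM u hij).trans_lt hu
  exact hK.elim_directed_cover _ (fun m => isOpen_lt (M ^ m).continuous.norm continuous_const)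
    hcover hmono.directed_le

section Perturbation

variable {A : ℕ → X →L[𝕜] X} {M : X →L[𝕜] X} {K : Set X}

theorem exists_eventually_forall_norm_pow_apply_le (hA1 : ∀ n, ‖A n‖ ≤ 1)
    (hA : Tendsto A atTop (𝓝 M)) (hM : ‖M‖ ≤ 1) (hK : IsCompact K)
    (hK0 : ∀ u ∈ K, Tendsto (fun n => (M ^ n) u) atTop (𝓝 0)) {ε : ℝ} (hε : 0 < ε) :
    ∃ m, ∀ᶠ n in atTop, ∀ k ≥ m, ∀ u ∈ K, ‖(A n ^ k) u‖ ≤ ε := by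
  obtain ⟨m, hm⟩ := exists_forall_norm_pow_apply_lt hM hK hK0 (half_pos hε)
  obtain ⟨R, hR, hKR⟩ := hK.isBounded.exists_pos_norm_le
  have hclose : ∀ᶠ n in atTop, ‖A n ^ m - M ^ m‖ < ε / 2 / R :=
    (tendsto_iff_norm_sub_tendsto_zero.1 (hA.pow m)).eventually (gt_mem_nhds (by positivity))
  refine ⟨m, hclose.mono fun n hn k hk u hu => ?_⟩
  calc ‖(A n ^ k) u‖ ≤ ‖(A n ^ m) u‖ := antitone_norm_pow_apply (hA1 n) u hk
    _ = ‖(M ^ m) u + (A n ^ m - M ^ m) u‖ := by rw [sub_apply, add_sub_cancel]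
    _ ≤ ‖(M ^ m) u‖ + ‖A n ^ m - M ^ m‖ * ‖u‖ := norm_add_le_of_le le_rfl (le_opNorm _ _)
    _ ≤ ε / 2 + ε / 2 / R * R := by gcongr; exacts [(hm u hu).le, hKR u hu]
    _ = ε := by field_simp; ring

theorem tendsto_pow_self_apply_zero (hA1 : ∀ n, ‖A n‖ ≤ 1) (hA : Tendsto A atTop (𝓝 M))
    (hM : ‖M‖ ≤ 1) {u : X} (hu : Tendsto (fun n => (M ^ n) u) atTop (𝓝 0)) :
    Tendsto (fun n => (A n ^ n) u) atTop (𝓝 0) := by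
  refine Metric.tendsto_nhds.2 fun ε hε => ?_
  obtain ⟨m, hm⟩ := exists_eventually_forall_norm_pow_apply_le hA1 hA hM isCompact_singleton
    (by simpa using hu) (half_pos hε)
  filter_upwards [hm, eventually_ge_atTop m] with n hn hmn
  simpa using (hn n hmn u rfl).trans_lt (half_lt_self hε)

theorem tendsto_inv_mul_sum_norm_pow_apply (hA1 : ∀ n, ‖A n‖ ≤ 1) (hA : Tendsto A atTop (𝓝 M))
    (hM : ‖M‖ ≤ 1) (hK : IsCompact K) (hK0 : ∀ u ∈ K, Tendsto (fun n => (M ^ n) u) atTop (𝓝 0))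
    {u : ℕ → ℕ → X} (hu : ∀ n k, u n k ∈ K) :
    Tendsto (fun n : ℕ => (n : ℝ)⁻¹ * ∑ k ∈ Finset.range n, ‖(A n ^ k) (u n k)‖) atTop (𝓝 0) := by
  obtain ⟨R, hKR⟩ := hK.isBounded.exists_norm_le
  refine tendsto_inv_mul_sum_range_of_eventually_le (fun _ _ => norm_nonneg _)
    (fun n k => (norm_pow_apply_le (hA1 n) k _).trans (hKR _ (hu n k))) fun ε hε => ?_
  obtain ⟨m, hm⟩ := exists_eventually_forall_norm_pow_apply_le hA1 hA hM hK hK0 hε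
  exact ⟨m, hm.mono fun n hn k hk => hn k hk _ (hu n k)⟩

end Perturbation

end ContinuousLinearMap

theorem tendsto_div_smul_nhds_zero {E : Type*} [NormedAddCommGroup E] [NormedSpace ℝ E] (t : ℝ)
    (a : E) : Tendsto (fun n : ℕ => (t / n) • a) atTop (𝓝 0) := by
  simpa using (tendsto_const_div_atTop_nhds_zero_nat t).smul_const a

namespace NormedSpace

variable {𝔸 : Type*} [NormedRing 𝔸] [NormedAlgebra ℝ 𝔸] [CompleteSpace 𝔸]

theorem exp_add_smul (a : 𝔸) (s τ : ℝ) : exp ((s + τ) • a) = exp (s • a) * exp (τ • a) := by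
  rw [add_smul]
  exact exp_add_of_commute_of_mem_ball (𝕂 := ℝ) (((Commute.refl a).smul_left s).smul_right τ)
    ((expSeries_radius_eq_top ℝ 𝔸).symm ▸ edist_lt_top _ _)
    ((expSeries_radius_eq_top ℝ 𝔸).symm ▸ edist_lt_top _ _)

theorem tendsto_mul_exp_div_smul (m a : 𝔸) (t : ℝ) :
    Tendsto (fun n : ℕ => m * exp ((t / n) • a)) atTop (𝓝 m) := by
  simpa [Function.comp_def] using tendsto_const_nhds.mul
    ((hasFDerivAt_exp_zero (𝕂 := ℝ)).continuousAt.tendsto.comp (tendsto_div_smul_nhds_zero t a))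

theorem tendsto_nat_mul_norm_exp_div_smul_sub (t : ℝ) (a : 𝔸) :
    Tendsto (fun n : ℕ => n * ‖exp ((t / n) • a) - 1 - (t / n) • a‖) atTop (𝓝 0) := by
  have hexp := (hasFDerivAt_iff_isLittleO_nhds_zero.1
    (hasFDerivAt_exp_zero (𝕂 := ℝ) (𝔸 := 𝔸))).comp_tendsto (tendsto_div_smul_nhds_zero t a)
  simp only [zero_add, exp_zero, Function.comp_def, one_apply_eq_self] at hexp
  have hscaled := (isBigO_refl (fun n : ℕ => (n : ℝ)) atTop).smul_isLittleO hexp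
  have hbounded : (fun n : ℕ => (n : ℝ) • (t / n) • a) =O[atTop] fun _ => (1 : ℝ) := by
    refine (isBigO_const_const (t • a) one_ne_zero atTop).congr' ?_ EventuallyEq.rfl
    filter_upwards [eventually_ne_atTop 0] with n hn
    rw [smul_smul, mul_div_cancel₀ _ (Nat.cast_ne_zero.2 hn)]
  simpa [norm_smul] using ((isLittleO_one_iff ℝ).1 (hscaled.trans_isBigO hbounded)).norm

end NormedSpace

namespace ContinuousLinearMap

variable {X : Type*} [NormedAddCommGroup X] [NormedSpace ℂ X]

theorem mul_apply_sub_apply_eq {M P L E F : X →L[ℂ] X} (τ : ℝ) {w : X} (hPw : P w = w)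
    (hMw : M w = w) :
    (M * E) w - F w =
      τ • (M - P) (L w) + (M ((E - 1 - τ • L) w) - (F - 1 - τ • (P * L * P)) w) := by
  simp only [mul_apply_eq_comp, sub_apply, smul_apply, one_apply_eq_self, map_sub,
    map_smul_of_tower, smul_sub, hPw, hMw]
  abel

theorem norm_mul_pow_apply_sub_le {M P L E F : X →L[ℂ] X} (hME : ‖M * E‖ ≤ 1) {τ : ℝ}
    (hτ : 0 ≤ τ) {w : ℕ → X} (hPw : ∀ j, P (w j) = w j) (hMw : ∀ j, M (w j) = w j)
    (hFw : ∀ j, w (j + 1) = F (w j)) {n : ℕ} {W : ℝ} (hW : ∀ j < n, ‖w j‖ ≤ W) :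
    ‖((M * E) ^ n) (w 0) - w n‖ ≤
      τ * ∑ k ∈ Finset.range n, ‖((M * E) ^ k) ((M - P) (L (w (n - 1 - k))))‖ +
        n * (‖M‖ * ‖E - 1 - τ • L‖ + ‖F - 1 - τ • (P * L * P)‖) * W := by
  rw [pow_apply_sub_eq_sum]
  refine (norm_sum_le _ _).trans ?_
  calc ∑ k ∈ Finset.range n, ‖((M * E) ^ k) ((M * E) (w (n - 1 - k)) - w (n - k))‖
      ≤ ∑ k ∈ Finset.range n, (τ * ‖((M * E) ^ k) ((M - P) (L (w (n - 1 - k))))‖ +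
          (‖M‖ * ‖E - 1 - τ • L‖ + ‖F - 1 - τ • (P * L * P)‖) * W) := by
        gcongr with k hk
        have hkn := Finset.mem_range.1 hk
        rw [show n - k = n - 1 - k + 1 by omega, hFw,
          mul_apply_sub_apply_eq (L := L) τ (hPw _) (hMw _), map_add, map_smul_of_tower]
        refine norm_add_le_of_le (by rw [norm_smul, Real.norm_of_nonneg hτ])
          ((norm_pow_apply_le hME _ _).trans ((norm_sub_le _ _).trans ?_))
        have hwW := hW (n - 1 - k) (by omega)
        calc ‖M ((E - 1 - τ • L) (w (n - 1 - k)))‖ + ‖(F - 1 - τ • (P * L * P)) (w (n - 1 - k))‖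
            ≤ ‖M‖ * (‖E - 1 - τ • L‖ * ‖w (n - 1 - k)‖) +
                ‖F - 1 - τ • (P * L * P)‖ * ‖w (n - 1 - k)‖ :=
              add_le_add ((M.le_opNorm _).trans (by gcongr; exact le_opNorm _ _)) (le_opNorm _ _)
          _ ≤ _ := by rw [← mul_assoc, ← add_mul]; gcongr
    _ = _ := by
        rw [Finset.sum_add_distrib, ← Finset.mul_sum, Finset.sum_const, Finset.card_range,
          nsmul_eq_mul]
        ring

variable [CompleteSpace X]

theorem norm_mul_pow_apply_sub_exp_apply_le {M P L E : X →L[ℂ] X} (hP : IsIdempotentElem P)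
    (hMP : M * P = P) (hME : ‖M * E‖ ≤ 1) {τ : ℝ} (hτ : 0 ≤ τ) {z : X} (hz : P z = z) {n : ℕ}
    {W : ℝ} (hW : ∀ j < n, ‖exp ((j * τ) • (P * L * P)) z‖ ≤ W) :
    ‖((M * E) ^ n) z - exp ((n * τ) • (P * L * P)) z‖ ≤
      τ * ∑ k ∈ Finset.range n,
          ‖((M * E) ^ k) ((M - P) (L (exp (((n - 1 - k : ℕ) * τ) • (P * L * P)) z)))‖ +
        n * (‖M‖ * ‖E - 1 - τ • L‖ + ‖exp (τ • (P * L * P)) - 1 - τ • (P * L * P)‖) * W := by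
  have hP_orbit (s : ℝ) : P (exp (s • (P * L * P)) z) = exp (s • (P * L * P)) z := by
    rw [← mul_apply_eq_comp, (((hP.commute_mul_mul L).smul_right s).exp_right).eq,
      mul_apply_eq_comp, hz]
  have hM_orbit (s : ℝ) : M (exp (s • (P * L * P)) z) = exp (s • (P * L * P)) z := by
    rw [← hP_orbit, ← mul_apply_eq_comp, hMP]
  have hstep (j : ℕ) : exp (((j + 1 : ℕ) * τ) • (P * L * P)) z =
      exp (τ • (P * L * P)) (exp ((j * τ) • (P * L * P)) z) := by
    rw [Nat.cast_succ, add_one_mul, add_comm]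
    -- not `rw`: the `ℝ`-action on `X →L[ℂ] X` here is only defeq to the `NormedAlgebra ℝ` one
    exact congr($(exp_add_smul (P * L * P) τ (j * τ)) z)
  simpa using norm_mul_pow_apply_sub_le hME hτ (fun j => hP_orbit _) (fun j => hM_orbit _) hstep hW

theorem tendsto_mul_exp_div_smul_pow_apply_of_apply_eq_self {L M P : X →L[ℂ] X}
    {t : ℝ} (hA1 : ∀ n : ℕ, ‖M * exp ((t / n) • L)‖ ≤ 1) (hM : ‖M‖ ≤ 1)
    (hconv : ∀ x, Tendsto (fun n => (M ^ n) x) atTop (𝓝 (P x))) (ht : 0 ≤ t) {z : X}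
    (hz : P z = z) :
    Tendsto (fun n : ℕ => ((M * exp ((t / n) • L)) ^ n) z) atTop
      (𝓝 (exp (t • (P * L * P)) z)) := by
  set G := P * L * P
  set γ : ℝ → X := fun s => exp (s • G) z
  have hγ : Continuous γ :=
    (differentiable_exp_smul_const ℝ G).continuous.clm_apply continuous_const
  obtain ⟨W, hW⟩ := (isCompact_Icc.image hγ).isBounded.exists_norm_le
  set v : ℝ → X := fun s => (M - P) (L (γ s))
  have hK0 : ∀ u ∈ v '' Set.Icc 0 t, Tendsto (fun n => (M ^ n) u) atTop (𝓝 0) := by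
    rintro _ ⟨s, -, rfl⟩
    convert hconv (v s)
    change (0 : X) = P ((M - P) (L (γ s)))
    rw [← mul_apply_eq_comp, mul_sub_eq_zero_of_tendsto_pow_apply hconv, zero_apply]
  set A : ℕ → X →L[ℂ] X := fun n => M * exp ((t / n) • L)
  have hbound : ∀ᶠ n : ℕ in atTop, ‖(A n ^ n) z - γ t‖ ≤
      t * ((n : ℝ)⁻¹ * ∑ k ∈ Finset.range n, ‖(A n ^ k) (v (((n - 1 - k : ℕ) : ℝ) * (t / n)))‖) +
        (‖M‖ * (n * ‖exp ((t / n) • L) - 1 - (t / n) • L‖) +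
          n * ‖exp ((t / n) • G) - 1 - (t / n) • G‖) * W := by
    filter_upwards [eventually_ne_atTop 0] with n hn
    have := norm_mul_pow_apply_sub_exp_apply_le (isIdempotentElem_of_tendsto_pow_apply hconv)
      (mul_eq_right_of_tendsto_pow_apply hconv) (hA1 n) (div_nonneg ht n.cast_nonneg) hz
      fun j hj => hW _ ⟨_, natCast_mul_div_mem_Icc ht hj.le, rfl⟩
    rw [mul_div_cancel₀ t (Nat.cast_ne_zero.2 hn : (n : ℝ) ≠ 0)] at this
    exact this.trans_eq (by ring)
  have hlim := ((tendsto_inv_mul_sum_norm_pow_apply hA1 (tendsto_mul_exp_div_smul M L t) hM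
      (isCompact_Icc.image (by fun_prop)) hK0
      (u := fun n k => v (((n - 1 - k : ℕ) : ℝ) * (t / n)))
      fun n k => ⟨_, natCast_mul_div_mem_Icc ht (by omega), rfl⟩).const_mul t).add
    (((tendsto_nat_mul_norm_exp_div_smul_sub t L).const_mul ‖M‖).add
      (tendsto_nat_mul_norm_exp_div_smul_sub t G) |>.mul_const W)
  simp only [mul_zero, add_zero, zero_mul] at hlim
  exact tendsto_sub_nhds_zero_iff.1 (squeeze_zero_norm' hbound hlim)

end ContinuousLinearMap

/-- Strong quantum Zeno limit without spectral gap. If `L` is a bounded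
generator of a contraction semigroup, and `M` is a contraction with `Mⁿ x → P x` for
all `x` (strong power-convergence), then for every `t ≥ 0` and `x`,
`(M e^{tL/n})ⁿ x → e^{t P L P} P x` as `n → ∞`. -/
theorem stmt9 {X : Type*} [NormedAddCommGroup X] [NormedSpace ℂ X] [CompleteSpace X]
    (L : X →L[ℂ] X)
    (hL : ∀ s : ℝ, 0 ≤ s → ‖NormedSpace.exp (s • L)‖ ≤ 1)
    (M P : X →L[ℂ] X) (hM : ‖M‖ ≤ 1)
    (hconv : ∀ x : X, Tendsto (fun n : ℕ => (M ^ n) x) atTop (nhds (P x)))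
    (t : ℝ) (ht : 0 ≤ t) (x : X) :
    Tendsto (fun n : ℕ => ((M * NormedSpace.exp ((t / n) • L)) ^ n) x) atTop
      (nhds ((NormedSpace.exp (t • (P * L * P)) * P) x)) := by
  have hP := ContinuousLinearMap.isIdempotentElem_of_tendsto_pow_apply hconv
  have hA1 (n : ℕ) : ‖M * NormedSpace.exp ((t / n) • L)‖ ≤ 1 :=
    (norm_mul_le_of_le hM (hL _ (by positivity))).trans_eq (one_mul 1)
  have hz := ContinuousLinearMap.tendsto_mul_exp_div_smul_pow_apply_of_apply_eq_self hA1 hM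
    hconv ht (z := P x) (by rw [← mul_apply_eq_comp, hP.eq])
  have hy := ContinuousLinearMap.tendsto_pow_self_apply_zero hA1
    (tendsto_mul_exp_div_smul M L t) hM (u := x - P x)
    (by simpa [← mul_apply_eq_comp, hP.eq] using hconv (x - P x))
  simpa only [← map_add, add_sub_cancel, add_zero, mul_apply_eq_comp] using hz.add hy
end

section
/- Let M ∈ B(X) be a contraction on a Banach space. If (Mⁿ) converges in operator norm to some operator P, then there exist C > 0 and 0 ≤ δ̃ < 1 such that ‖Mⁿ − P‖ ≤ C δ̃^{n+1} for all n. (Uniform power-convergence of a contraction is automatically exponentially fast.) -/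
/-!
If `Mⁿ → P` then `MP = PM = P = P²`, so `Q := M - P` satisfies `Mⁿ - P = Qⁿ (1 - P)` for every `n`.
Since `Qⁿ → 0`, some power `Q^N` has norm `r < 1`, and writing `n = Nq + s` with `s < N` gives
`‖Qⁿ‖ ≤ r^q · max_{s<N} ‖Qˢ‖`, i.e. geometric decay at rate `r^{1/N}`.
-/

open Filter Topology

theorem pow_mul_eq_right_of_mul_eq_right {M : Type*} [Monoid M] {a p : M} (h : a * p = p)
    (n : ℕ) : a ^ n * p = p := by
  induction n with
  | zero => rw [pow_zero, one_mul]
  | succ n ih => rw [pow_succ', mul_assoc, ih, h]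

section TopologicalMonoid

variable {M : Type*} [Monoid M] [TopologicalSpace M] [ContinuousMul M] [T2Space M] {a p : M}

theorem mul_eq_right_of_tendsto_pow (h : Tendsto (a ^ ·) atTop (𝓝 p)) : a * p = p :=
  tendsto_nhds_unique (h.const_mul a) <| by
    simpa only [pow_succ'] using (tendsto_add_atTop_iff_nat 1).2 h

theorem mul_eq_left_of_tendsto_pow (h : Tendsto (a ^ ·) atTop (𝓝 p)) : p * a = p :=
  tendsto_nhds_unique (h.mul_const a) <| by
    simpa only [pow_succ] using (tendsto_add_atTop_iff_nat 1).2 h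

theorem isIdempotentElem_of_tendsto_pow (h : Tendsto (a ^ ·) atTop (𝓝 p)) :
    IsIdempotentElem p :=
  tendsto_nhds_unique (h.mul_const p) <| by
    simpa only [pow_mul_eq_right_of_mul_eq_right (mul_eq_right_of_tendsto_pow h)]
      using tendsto_const_nhds

end TopologicalMonoid

section Ring

variable {R : Type*} [Ring R] {a p : R}

theorem sub_pow_succ_eq_pow_succ_sub (hap : a * p = p) (hpa : p * a = p)
    (hp : IsIdempotentElem p) (n : ℕ) : (a - p) ^ (n + 1) = a ^ (n + 1) - p := by
  induction n with
  | zero => simp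
  | succ n ih =>
    rw [pow_succ, ih, sub_mul, mul_sub, mul_sub, pow_mul_eq_right_of_mul_eq_right hap, hpa, hp.eq,
      ← pow_succ, sub_self, sub_zero]

theorem sub_pow_mul_one_sub (hap : a * p = p) (hpa : p * a = p) (hp : IsIdempotentElem p)
    (n : ℕ) : (a - p) ^ n * (1 - p) = a ^ n - p := by
  cases n with
  | zero => simp
  | succ n =>
    rw [pow_succ, mul_assoc, mul_one_sub, sub_mul, hap, hp.eq, sub_self, sub_zero, ← pow_succ,
      sub_pow_succ_eq_pow_succ_sub hap hpa hp]

end Ring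

section NormedRing

variable {R : Type*} [NormedRing R]

theorem norm_pow_mul_add_le (b : R) (N s q : ℕ) : ‖b ^ (N * q + s)‖ ≤ ‖b ^ N‖ ^ q * ‖b ^ s‖ := by
  induction q with
  | zero => simp
  | succ q ih =>
    calc ‖b ^ (N * (q + 1) + s)‖ = ‖b ^ N * b ^ (N * q + s)‖ := by
          rw [show N * (q + 1) + s = N + (N * q + s) by ring, pow_add]
      _ ≤ ‖b ^ N‖ * ‖b ^ (N * q + s)‖ := norm_mul_le _ _
      _ ≤ ‖b ^ N‖ * (‖b ^ N‖ ^ q * ‖b ^ s‖) := by gcongr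
      _ = ‖b ^ N‖ ^ (q + 1) * ‖b ^ s‖ := by ring

theorem exists_norm_pow_le_of_norm_pow_lt_one {b : R} {N : ℕ} (hN : 0 < N) (hb : ‖b ^ N‖ < 1) :
    ∃ C > 0, ∃ δ > 0, δ < 1 ∧ ∀ n, ‖b ^ n‖ ≤ C * δ ^ n := by
  -- `r` is kept away from `0` so that `δ = r^{1/N}` is positive
  set r := max ‖b ^ N‖ (1 / 2)
  set K := ∑ s ∈ Finset.range N, ‖b ^ s‖
  have hr₀ : 0 < r := lt_max_of_lt_right (by norm_num)
  have hr₁ : r < 1 := max_lt hb (by norm_num)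
  set δ := r ^ (N⁻¹ : ℝ)
  have hδ₀ : 0 < δ := Real.rpow_pos_of_pos hr₀ _
  have hδ₁ : δ < 1 := Real.rpow_lt_one hr₀.le hr₁ (by positivity)
  have hδN : δ ^ N = r := by
    rw [← Real.rpow_natCast, ← Real.rpow_mul hr₀.le, inv_mul_cancel₀ (by positivity),
      Real.rpow_one]
  refine ⟨(K + 1) / r, by positivity, δ, hδ₀, hδ₁, fun n => ?_⟩
  obtain ⟨q, s, hs, rfl⟩ : ∃ q s, s < N ∧ n = N * q + s :=
    ⟨n / N, n % N, Nat.mod_lt n hN, (Nat.div_add_mod n N).symm⟩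
  have hK : ‖b ^ s‖ ≤ K + 1 := by
    have := Finset.single_le_sum (fun i _ => norm_nonneg (b ^ i)) (Finset.mem_range.2 hs)
    linarith
  have hrq : r ^ q * r ≤ δ ^ (N * q + s) := by
    calc r ^ q * r = δ ^ (N * q + N) := by rw [pow_add, pow_mul, hδN]
      _ ≤ δ ^ (N * q + s) := pow_le_pow_of_le_one hδ₀.le hδ₁.le (by omega)
  calc ‖b ^ (N * q + s)‖ ≤ ‖b ^ N‖ ^ q * ‖b ^ s‖ := norm_pow_mul_add_le b N s q
    _ ≤ r ^ q * (K + 1) := by gcongr; exact le_max_left _ _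
    _ = (K + 1) / r * (r ^ q * r) := by field_simp
    _ ≤ (K + 1) / r * δ ^ (N * q + s) := by gcongr

end NormedRing

theorem stmt15_general {X : Type*} [NormedAddCommGroup X] [NormedSpace ℂ X]
    (M P : X →L[ℂ] X)
    (hconv : Tendsto (fun n : ℕ => M ^ n) atTop (nhds P)) :
    ∃ C > 0, ∃ δ : ℝ, 0 ≤ δ ∧ δ < 1 ∧ ∀ n : ℕ, ‖M ^ n - P‖ ≤ C * δ ^ (n + 1) := by
  have hap := mul_eq_right_of_tendsto_pow hconv
  have hpa := mul_eq_left_of_tendsto_pow hconv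
  have hp := isIdempotentElem_of_tendsto_pow hconv
  obtain ⟨N, hN⟩ : ∃ N, ‖(M - P) ^ (N + 1)‖ < 1 := by
    have hlim : Tendsto (fun n => ‖(M - P) ^ (n + 1)‖) atTop (𝓝 0) := by
      simpa only [sub_pow_succ_eq_pow_succ_sub hap hpa hp, ← tendsto_iff_norm_sub_tendsto_zero]
        using (tendsto_add_atTop_iff_nat 1).2 hconv
    exact (hlim.eventually (gt_mem_nhds one_pos)).exists
  obtain ⟨C, hC₀, δ, hδ₀, hδ₁, hC⟩ := exists_norm_pow_le_of_norm_pow_lt_one N.succ_pos hN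
  refine ⟨C * (‖1 - P‖ + 1) / δ, by positivity, δ, hδ₀.le, hδ₁, fun n => ?_⟩
  calc ‖M ^ n - P‖ = ‖(M - P) ^ n * (1 - P)‖ := by rw [sub_pow_mul_one_sub hap hpa hp]
    _ ≤ C * δ ^ n * (‖1 - P‖ + 1) := by
      grw [norm_mul_le, hC]
      gcongr
      linarith
    _ = C * (‖1 - P‖ + 1) / δ * δ ^ (n + 1) := by field_simp; ring

/-- If a contraction `M` on a Banach space is uniformly power-convergent,
i.e. `Mⁿ → P` in operator norm, then the convergence is automatically exponentially
fast: there are `C > 0` and `0 ≤ δ < 1` with `‖Mⁿ - P‖ ≤ C δ^{n+1}` for all `n`. -/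
theorem stmt15 {X : Type*} [NormedAddCommGroup X] [NormedSpace ℂ X] [CompleteSpace X]
    (M P : X →L[ℂ] X) (hM : ‖M‖ ≤ 1)
    (hconv : Tendsto (fun n : ℕ => M ^ n) atTop (nhds P)) :
    ∃ C > 0, ∃ δ : ℝ, 0 ≤ δ ∧ δ < 1 ∧ ∀ n : ℕ, ‖M ^ n - P‖ ≤ C * δ ^ (n + 1) :=
  stmt15_general M P hconv
end

section
/- Let M ∈ B(X) be a contraction, 0 ≤ δ < 1, and suppose Spec(M) ⊆ B_δ ∪ {λ₁,…,λ_J} with |λ_j| = 1 and all quasi-nilpotent parts zero. Let ℒ ∈ B(X) generate a contraction semigroup. Then there exists ε > 0 (depending on ‖ℒ‖ and the resolvent bound of M outside the spectral contours) such that for all t ∈ [0, ε] and all z in the closed disk of radius 3/2 outside the contour regions Ω, z lies in the resolvent set of M e^{tℒ}, and sup_{(t,z) ∈ [0,ε]×(B_{3/2}∖Ω)} ‖(z − M e^{tℒ})⁻¹‖ < ∞. -/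
/-!
The compact set `S = B̄(0, 3/2) \ Ω` avoids `Spec(M)`, i.e. lies in the resolvent set of
`M = M e^{0 • L}`. Since the units of a Banach algebra form an open set on which inversion is
continuous, invertibility of `z - M e^{tL}` together with a bound on the inverse persists on a
neighbourhood of each `(0, z)`, and compactness of `S` makes the neighbourhood in `t` uniform.
-/

open Filter Topology Function Metric

theorem IsCompact.exists_bound_inverse_eventually {R Y Z : Type*} [NormedRing R]
    [HasSummableGeomSeries R] [TopologicalSpace Y] [TopologicalSpace Z] {K : Set Y}
    (hK : IsCompact K) {f : Z → Y → R} {x₀ : Z}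
    (hf : ∀ y ∈ K, ContinuousAt (uncurry f) (x₀, y)) (hunit : ∀ y ∈ K, IsUnit (f x₀ y)) :
    ∃ C, ∀ᶠ x in 𝓝 x₀, ∀ y ∈ K, IsUnit (f x y) ∧ ‖Ring.inverse (f x y)‖ ≤ C := by
  have hinv : ∀ y ∈ K, ContinuousAt (fun p : Z × Y => Ring.inverse (uncurry f p)) (x₀, y) :=
    fun y hy => by
      have h := NormedRing.inverse_continuousAt (hunit y hy).unit
      rw [IsUnit.unit_spec] at h
      exact ContinuousAt.comp (g := Ring.inverse) h (hf y hy)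
  obtain ⟨C, hC⟩ := hK.exists_bound_of_continuousOn fun y hy =>
    ((hinv y hy).comp (Continuous.prodMk_right x₀).continuousAt).continuousWithinAt
  refine ⟨C + 1, hK.eventually_forall_of_forall_eventually fun y hy => ?_⟩
  have hunit_near : ∀ᶠ p in 𝓝 (x₀, y), IsUnit (uncurry f p) :=
    (hf y hy).eventually_mem (Units.isOpen.mem_nhds (hunit y hy))
  have hnorm_near : ∀ᶠ p in 𝓝 (x₀, y), ‖Ring.inverse (uncurry f p)‖ < C + 1 :=
    (hinv y hy).norm.eventually_lt continuousAt_const ((hC y hy).trans_lt (lt_add_one C))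
  exact (hunit_near.and hnorm_near).mono fun p hp => ⟨hp.1, hp.2.le⟩

theorem stmt16_general {X : Type*} [NormedAddCommGroup X] [NormedSpace ℂ X] [CompleteSpace X]
    (M : X →L[ℂ] X)
    (J : ℕ) (lam : Fin J → ℂ)
    (δ : ℝ)
    (hspec : spectrum ℂ M ⊆ Metric.closedBall 0 δ ∪ Set.range lam)
    (r : Fin J → ℝ) (hr : ∀ j, 0 < r j)
    (L : X →L[ℂ] X)
    (δ' : ℝ) (hδ'1 : δ < δ') :
    ∃ ε > 0, ∃ C : ℝ, ∀ t ∈ Set.Icc (0 : ℝ) ε,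
      ∀ z ∈ Metric.closedBall (0 : ℂ) (3 / 2) \
          (Metric.ball (0 : ℂ) δ' ∪ ⋃ j, Metric.ball (lam j) (r j)),
        IsUnit (algebraMap ℂ (X →L[ℂ] X) z - M * NormedSpace.exp (t • L)) ∧
        ‖Ring.inverse (algebraMap ℂ (X →L[ℂ] X) z - M * NormedSpace.exp (t • L))‖ ≤ C := by
  set S := closedBall (0 : ℂ) (3 / 2) \ (ball (0 : ℂ) δ' ∪ ⋃ j, ball (lam j) (r j))
  have hS : IsCompact S :=
    (isCompact_closedBall _ _).diff (isOpen_ball.union (isOpen_iUnion fun _ => isOpen_ball))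
  have hres : ∀ z ∈ S, IsUnit (algebraMap ℂ (X →L[ℂ] X) z - M) := by
    intro z hz
    by_contra hspec_z
    rcases hspec hspec_z with h0 | ⟨j, rfl⟩
    · exact hz.2 (Or.inl (mem_ball.2 ((mem_closedBall.1 h0).trans_lt hδ'1)))
    · exact hz.2 (Or.inr (Set.mem_iUnion.2 ⟨j, mem_ball_self (hr j)⟩))
  have hexp : Continuous (NormedSpace.exp : (X →L[ℂ] X) → X →L[ℂ] X) :=
    continuous_iff_continuousAt.2 fun A => (NormedSpace.exp_analytic (𝕂 := ℂ) A).continuousAt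
  have hcont : Continuous fun p : ℝ × ℂ =>
      algebraMap ℂ (X →L[ℂ] X) p.2 - M * NormedSpace.exp (p.1 • L) := by
    fun_prop
  obtain ⟨C, hC⟩ := hS.exists_bound_inverse_eventually
    (f := fun t z => algebraMap ℂ (X →L[ℂ] X) z - M * NormedSpace.exp (t • L)) (x₀ := 0)
    (fun _ _ => hcont.continuousAt) (fun z hz => by simpa using hres z hz)
  obtain ⟨ε, hε, hεC⟩ := nhds_basis_closedBall.eventually_iff.1 hC
  refine ⟨ε, hε, C, fun t ht => hεC ?_⟩
  rw [Real.closedBall_eq_Icc, zero_sub, zero_add]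
  exact Set.Icc_subset_Icc (by linarith) le_rfl ht

/-- Uniform resolvent bound for the perturbed operator `M e^{tL}`. Let
`M` be a contraction with `Spec(M) ⊆ B_δ ∪ {λ₁, …, λ_J}`, `|λ_j| = 1`, `δ < 1`, whose
quasi-nilpotent parts at the `λ_j` (defined via the Riesz projections `P_j`) vanish,
and let `L` be a bounded generator of a contraction semigroup. Let `Ω` be the union
of the interiors of the separating contours: small open balls around each `λ_j`
together with the open ball of radius `δ'` (with `δ < δ' < 1`) around `0`. Then there
exists `ε > 0` such that for all `t ∈ [0, ε]` and all `z` in the closed disk of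
radius `3/2` outside `Ω`, `z` lies in the resolvent set of `M e^{tL}`, and the
resolvent norm is uniformly bounded there. -/
theorem stmt16 {X : Type*} [NormedAddCommGroup X] [NormedSpace ℂ X] [CompleteSpace X]
    (M : X →L[ℂ] X) (hM : ‖M‖ ≤ 1)
    (J : ℕ) (lam : Fin J → ℂ) (hlam : ∀ j, ‖lam j‖ = 1)
    (δ : ℝ) (hδ0 : 0 ≤ δ) (hδ1 : δ < 1)
    (hspec : spectrum ℂ M ⊆ Metric.closedBall 0 δ ∪ Set.range lam)
    (r : Fin J → ℝ) (hr : ∀ j, 0 < r j)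
    (hsep : ∀ j, spectrum ℂ M ∩ Metric.closedBall (lam j) (r j) = {lam j})
    (hNil : ∀ j, (algebraMap ℂ (X →L[ℂ] X) (lam j) - M) *
      ((2 * (Real.pi : ℂ) * Complex.I)⁻¹ •
        (∮ z in C(lam j, r j), Ring.inverse (algebraMap ℂ (X →L[ℂ] X) z - M))) = 0)
    (L : X →L[ℂ] X)
    (hL : ∀ s : ℝ, 0 ≤ s → ‖NormedSpace.exp (s • L)‖ ≤ 1)
    (δ' : ℝ) (hδ'1 : δ < δ') (hδ'2 : δ' < 1)
    (hballs : ∀ j, Disjoint (Metric.ball (lam j) (r j)) (Metric.closedBall (0 : ℂ) δ'))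
    (hballs2 : ∀ j l, j ≠ l → Disjoint (Metric.ball (lam j) (r j)) (Metric.ball (lam l) (r l))) :
    ∃ ε > 0, ∃ C : ℝ, ∀ t ∈ Set.Icc (0 : ℝ) ε,
      ∀ z ∈ Metric.closedBall (0 : ℂ) (3 / 2) \
          (Metric.ball (0 : ℂ) δ' ∪ ⋃ j, Metric.ball (lam j) (r j)),
        IsUnit (algebraMap ℂ (X →L[ℂ] X) z - M * NormedSpace.exp (t • L)) ∧
        ‖Ring.inverse (algebraMap ℂ (X →L[ℂ] X) z - M * NormedSpace.exp (t • L))‖ ≤ C :=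
  stmt16_general M J lam δ hspec r hr L δ' hδ'1
end
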